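/- arXiv:1510.01286 — 2 statements merged into one kernel-verified Lean document; each statement's English description precedes it below -/
import Mathlib

section
/- Let (X, Δ) be a sinking abstract delta sequence with |X| = n ≥ 1. Then its tau function attains its minimum at its last argument and only there: τ_Δ(n) < τ_Δ(i) for every 0 ≤ i ≤ n−1. -/
/-! Abstract delta sequences, their reduced forms, and the sinking condition,
following Stoffregen (after Hom–Karakurt–Lidman and Can–Karakurt). An abstract delta
sequence is a function `Δ : α → ℤ` (nonzero on a finite linearly ordered set `X`,
positive at the minimum of `X`).

`dsRun X Δ x` is the (maximal) run of `x` in `X`: all `y ∈ X` such that every element of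
`X` lying (inclusively) between `x` and `y` has the same sign of `Δ` as `x`.

`redSet X Δ` is the underlying set of the reduced form of `(X, Δ)`: for each maximal run
of constant sign it keeps the largest element if the sign is positive and the smallest
element if the sign is negative.

`redDelta X Δ x` is the value of the reduced delta sequence at `x`: the sum of `Δ` over
the run of `x`. -/

open Classical in
noncomputable def dsRun {α : Type*} [LinearOrder α] (X : Finset α) (Δ : α → ℤ) (x : α) :
    Finset α :=
  X.filter (fun y => ∀ z ∈ X, min x y ≤ z → z ≤ max x y → (0 < Δ z ↔ 0 < Δ x))

open Classical in
noncomputable def redSet {α : Type*} [LinearOrder α] (X : Finset α) (Δ : α → ℤ) : Finset α :=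
  X.filter (fun x =>
    (0 < Δ x ∧ ∀ y ∈ dsRun X Δ x, y ≤ x) ∨ (Δ x < 0 ∧ ∀ y ∈ dsRun X Δ x, x ≤ y))

noncomputable def redDelta {α : Type*} [LinearOrder α] (X : Finset α) (Δ : α → ℤ) (x : α) :
    ℤ :=
  ∑ y ∈ dsRun X Δ x, Δ y

/-- A delta sequence `(X, Δ)` is sinking if: (i) `Δ` is negative at the maximum of `X`;
(ii) each positive value of the reduced sequence is at most the absolute value of the next
negative value of the reduced sequence; (iii) the last positive value of the reduced
sequence is strictly less than the absolute value of its final value. -/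
def IsSinking {α : Type*} [LinearOrder α] (X : Finset α) (Δ : α → ℤ) : Prop :=
  (∀ m ∈ X, (∀ x ∈ X, x ≤ m) → Δ m < 0) ∧
  (∀ x ∈ redSet X Δ, 0 < redDelta X Δ x →
    ∀ y ∈ redSet X Δ, x < y → redDelta X Δ y < 0 →
      (∀ z ∈ redSet X Δ, x < z → redDelta X Δ z < 0 → y ≤ z) →
      redDelta X Δ x ≤ -redDelta X Δ y) ∧
  (∀ x ∈ redSet X Δ, 0 < redDelta X Δ x →
    (∀ z ∈ redSet X Δ, 0 < redDelta X Δ z → z ≤ x) →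
    ∀ m ∈ redSet X Δ, (∀ z ∈ redSet X Δ, z ≤ m) →
      redDelta X Δ x < -redDelta X Δ m)

/-! Write the tail `Δ(i) + ⋯ + Δ(n-1) = τ(n) - τ(i)` as a sequence of negative terms and of
blocks, each made of a (possibly left-truncated) maximal positive run followed by the next
maximal negative run. The truncated positive run sums to at most its reduced value `p`, the
negative run sums exactly to its reduced value `q`, so condition (ii) gives `p + q ≤ 0` for
every block, and condition (iii) gives `p + q < 0` for a block ending at `n`. Since the tail
ends either with a negative term or with such a block, every tail sum is negative. -/

open Finset

theorem Nat.exists_first_not_of_le {P : ℕ → Prop} {i j : ℕ} (hij : i ≤ j) (hj : ¬ P j) :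
    ∃ k ∈ Icc i j, (∀ m ∈ Ico i k, P m) ∧ ¬ P k := by
  classical
  have h : ∃ k, i ≤ k ∧ ¬ P k := ⟨j, hij, hj⟩
  obtain ⟨hik, hk⟩ := Nat.find_spec h
  refine ⟨Nat.find h, mem_Icc.2 ⟨hik, Nat.find_min' h ⟨hij, hj⟩⟩, fun m hm => ?_, hk⟩
  rw [mem_Ico] at hm
  by_contra hPm
  exact Nat.find_min h hm.2 ⟨hm.1, hPm⟩

section LinearOrder

variable {α : Type*} [LinearOrder α] {X : Finset α} {Δ : α → ℤ} {x y z : α}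

theorem mem_dsRun : y ∈ dsRun X Δ x ↔
    y ∈ X ∧ ∀ z ∈ X, min x y ≤ z → z ≤ max x y → (0 < Δ z ↔ 0 < Δ x) := by
  simp [dsRun]

theorem mem_redSet : x ∈ redSet X Δ ↔ x ∈ X ∧
    ((0 < Δ x ∧ ∀ y ∈ dsRun X Δ x, y ≤ x) ∨ (Δ x < 0 ∧ ∀ y ∈ dsRun X Δ x, x ≤ y)) := by
  simp [redSet]

theorem self_mem_dsRun (hx : x ∈ X) : x ∈ dsRun X Δ x :=
  mem_dsRun.2 ⟨hx, fun z _ hxz hzx => by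
    rw [le_antisymm (by simpa using hzx) (by simpa using hxz : x ≤ z)]⟩

theorem pos_iff_of_mem_dsRun (hy : y ∈ dsRun X Δ x) : 0 < Δ y ↔ 0 < Δ x :=
  (mem_dsRun.1 hy).2 y (mem_dsRun.1 hy).1 (min_le_right _ _) (le_max_right _ _)

theorem notMem_dsRun_of_between (hz : z ∈ X) (hxz : min x y ≤ z) (hzy : z ≤ max x y)
    (hsign : ¬ (0 < Δ z ↔ 0 < Δ x)) : y ∉ dsRun X Δ x :=
  fun hy => hsign ((mem_dsRun.1 hy).2 z hz hxz hzy)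

theorem redDelta_pos (hx : x ∈ X) (hpos : 0 < Δ x) : 0 < redDelta X Δ x :=
  sum_pos (fun _ hy => (pos_iff_of_mem_dsRun hy).2 hpos) ⟨x, self_mem_dsRun hx⟩

theorem redDelta_neg (hx : x ∈ X) (hneg : Δ x < 0) : redDelta X Δ x < 0 :=
  sum_neg' (fun _ hy => not_lt.1 fun h => hneg.not_ge ((pos_iff_of_mem_dsRun hy).1 h).le)
    ⟨x, self_mem_dsRun hx, hneg⟩

end LinearOrder

section Range

variable {n : ℕ} {Δ : ℕ → ℤ}

theorem Ico_subset_dsRun {a b x : ℕ} (hb : b ≤ n) (hx : x ∈ Ico a b)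
    (hsign : ∀ z ∈ Ico a b, (0 < Δ z ↔ 0 < Δ x)) : Ico a b ⊆ dsRun (range n) Δ x := by
  intro y hy
  simp only [mem_Ico] at hx hy
  refine mem_dsRun.2 ⟨mem_range.2 (by omega), fun z _ hxz hzy => hsign z ?_⟩
  simp only [mem_Ico, min_le_iff, le_max_iff] at hxz hzy ⊢
  omega

theorem mem_redSet_of_sign_change {x : ℕ} (hx : x + 1 < n) (hpos : 0 < Δ x)
    (hneg : Δ (x + 1) < 0) : x ∈ redSet (range n) Δ ∧ x + 1 ∈ redSet (range n) Δ := by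
  have hsign : ¬ (0 < Δ (x + 1) ↔ 0 < Δ x) := by simp [hpos, hneg.le]
  refine ⟨mem_redSet.2 ⟨mem_range.2 (by omega), .inl ⟨hpos, fun w hw => ?_⟩⟩,
    mem_redSet.2 ⟨mem_range.2 hx, .inr ⟨hneg, fun w hw => ?_⟩⟩⟩
  · by_contra! hxw
    exact notMem_dsRun_of_between (mem_range.2 hx) (by simp)
      (by simp only [le_max_iff]; omega) hsign hw
  · by_contra! hwx
    exact notMem_dsRun_of_between (z := x) (mem_range.2 (by omega))
      (by simp only [min_le_iff]; omega) (by simp)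
      (fun h => hsign h.symm) hw

theorem sum_Ico_le_redDelta {i x : ℕ} (hix : i ≤ x) (hxn : x < n)
    (hpos : ∀ k ∈ Ico i (x + 1), 0 < Δ k) :
    ∑ k ∈ Ico i (x + 1), Δ k ≤ redDelta (range n) Δ x := by
  have hΔx : 0 < Δ x := hpos x (mem_Ico.2 ⟨hix, by omega⟩)
  refine sum_le_sum_of_subset_of_nonneg (Ico_subset_dsRun (by omega) (mem_Ico.2 ⟨hix, by omega⟩)
    fun z hz => iff_of_true (hpos z hz) hΔx) fun w hw _ => ?_
  exact ((pos_iff_of_mem_dsRun hw).2 hΔx).le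

theorem dsRun_eq_Ico {x e : ℕ} (hpos : 0 < Δ x) (hxe : x + 1 < e) (hen : e ≤ n)
    (hneg : ∀ k ∈ Ico (x + 1) e, Δ k < 0) (hend : e = n ∨ 0 < Δ e) :
    dsRun (range n) Δ (x + 1) = Ico (x + 1) e := by
  have hΔ : ¬ 0 < Δ (x + 1) := (hneg _ (mem_Ico.2 ⟨le_rfl, hxe⟩)).not_gt
  refine Subset.antisymm (fun w hw => mem_Ico.2 ⟨?_, ?_⟩) (Ico_subset_dsRun hen
    (mem_Ico.2 ⟨le_rfl, hxe⟩) fun z hz => iff_of_false (hneg z hz).not_gt hΔ)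
  · by_contra! hwx
    exact notMem_dsRun_of_between (z := x) (mem_range.2 (by omega))
      (by simp only [min_le_iff]; omega) (by simp) (by simp [hpos, hΔ]) hw
  · by_contra! hew
    have hwn := mem_range.1 (mem_dsRun.1 hw).1
    exact notMem_dsRun_of_between (z := e) (mem_range.2 (by omega))
      (by simp only [min_le_iff]; omega) (by simp only [le_max_iff]; omega)
      (by simp [hend.resolve_left (by omega), hΔ]) hw

theorem exists_pos_then_neg_run (hnz : ∀ k < n, Δ k ≠ 0) (hlast : Δ (n - 1) < 0) {i : ℕ}
    (hi : i < n) (hpos : 0 < Δ i) :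
    ∃ x e, i ≤ x ∧ x + 1 < e ∧ e ≤ n ∧ (∀ k ∈ Ico i (x + 1), 0 < Δ k) ∧
      (∀ k ∈ Ico (x + 1) e, Δ k < 0) ∧ (e = n ∨ 0 < Δ e) := by
  obtain ⟨y, hy, hposrun, hy0⟩ := Nat.exists_first_not_of_le (P := fun k => 0 < Δ k)
    (show i ≤ n - 1 by omega) hlast.not_gt
  rw [mem_Icc] at hy
  have hyi : y ≠ i := by rintro rfl; exact hy0 hpos
  obtain ⟨x, rfl⟩ : ∃ x, y = x + 1 := Nat.exists_eq_add_one.2 (by omega)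
  have hΔy : Δ (x + 1) < 0 := (hnz _ (by omega)).lt_of_le (not_lt.1 hy0)
  -- the conjunct `k < n` stops the search for the end of the negative run at `n`
  obtain ⟨e, he, hnegrun, he0⟩ := Nat.exists_first_not_of_le
    (P := fun k => k < n ∧ Δ k < 0) (show x + 1 ≤ n by omega) (by simp)
  rw [mem_Icc] at he
  have hxe : x + 1 ≠ e := by rintro rfl; exact he0 ⟨by omega, hΔy⟩
  refine ⟨x, e, ?_, by omega, he.2, hposrun, fun k hk => (hnegrun k hk).2, ?_⟩
  · by_contra! hxi
    exact hy0 (by rwa [show x + 1 = i by omega])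
  · rcases he.2.eq_or_lt with h | h
    · exact .inl h
    · exact .inr ((hnz e h).lt_or_gt.resolve_left fun hneg => he0 ⟨h, hneg⟩)

theorem sum_Ico_le_redDelta_add_redDelta {i x e : ℕ} (hix : i ≤ x) (hxe : x + 1 < e)
    (hen : e ≤ n) (hpos : ∀ k ∈ Ico i (x + 1), 0 < Δ k) (hneg : ∀ k ∈ Ico (x + 1) e, Δ k < 0)
    (hend : e = n ∨ 0 < Δ e) :
    ∑ k ∈ Ico i e, Δ k ≤ redDelta (range n) Δ x + redDelta (range n) Δ (x + 1) := by
  have hΔx : 0 < Δ x := hpos x (mem_Ico.2 ⟨hix, by omega⟩)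
  have hq : redDelta (range n) Δ (x + 1) = ∑ k ∈ Ico (x + 1) e, Δ k := by
    rw [redDelta, dsRun_eq_Ico hΔx hxe hen hneg hend]
  rw [← sum_Ico_consecutive Δ (by omega : i ≤ x + 1) hxe.le, hq]
  linarith [sum_Ico_le_redDelta (n := n) hix (by omega) hpos]

theorem le_of_mem_redSet_of_neg_on_Ico {y z : ℕ} (hneg : ∀ k ∈ Ico y n, Δ k < 0)
    (hz : z ∈ redSet (range n) Δ) : z ≤ y := by
  by_contra! hyz
  obtain ⟨hzn, hpos | ⟨-, hmin⟩⟩ := mem_redSet.1 hz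
  · rw [mem_range] at hzn
    exact (hneg z (mem_Ico.2 ⟨hyz.le, hzn⟩)).not_gt hpos.1
  · rw [mem_range] at hzn
    have hΔz := hneg z (mem_Ico.2 ⟨hyz.le, hzn⟩)
    have hy : y ∈ dsRun (range n) Δ z :=
      Ico_subset_dsRun le_rfl (mem_Ico.2 ⟨hyz.le, hzn⟩)
        (fun k hk => iff_of_false (hneg k hk).not_gt hΔz.not_gt) (mem_Ico.2 ⟨le_rfl, by omega⟩)
    exact hyz.not_ge (hmin y hy)

theorem le_of_redDelta_pos_of_neg_on_Ico {x z : ℕ} (hneg : ∀ k ∈ Ico (x + 1) n, Δ k < 0)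
    (hz : z ∈ range n) (hpos : 0 < redDelta (range n) Δ z) : z ≤ x := by
  by_contra! hxz
  exact hpos.not_gt (redDelta_neg hz (hneg z (mem_Ico.2 ⟨hxz, mem_range.1 hz⟩)))

theorem IsSinking.sum_Ico_nonpos (hs : IsSinking (range n) Δ) {i x e : ℕ} (hix : i ≤ x)
    (hxe : x + 1 < e) (hen : e ≤ n) (hpos : ∀ k ∈ Ico i (x + 1), 0 < Δ k)
    (hneg : ∀ k ∈ Ico (x + 1) e, Δ k < 0) (hend : e = n ∨ 0 < Δ e) :
    ∑ k ∈ Ico i e, Δ k ≤ 0 := by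
  have hΔx : 0 < Δ x := hpos x (mem_Ico.2 ⟨hix, by omega⟩)
  have hΔy : Δ (x + 1) < 0 := hneg (x + 1) (mem_Ico.2 ⟨le_rfl, hxe⟩)
  obtain ⟨hx, hy⟩ := mem_redSet_of_sign_change (n := n) (by omega) hΔx hΔy
  have hpq := hs.2.1 x hx (redDelta_pos (mem_range.2 (by omega)) hΔx) (x + 1) hy (lt_add_one x)
    (redDelta_neg (mem_range.2 (by omega)) hΔy) fun _ _ hxz _ => hxz
  linarith [sum_Ico_le_redDelta_add_redDelta hix hxe hen hpos hneg hend]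

theorem IsSinking.sum_Ico_neg_of_last_block (hs : IsSinking (range n) Δ) {i x : ℕ}
    (hix : i ≤ x) (hxn : x + 1 < n) (hpos : ∀ k ∈ Ico i (x + 1), 0 < Δ k)
    (hneg : ∀ k ∈ Ico (x + 1) n, Δ k < 0) :
    ∑ k ∈ Ico i n, Δ k < 0 := by
  have hΔx : 0 < Δ x := hpos x (mem_Ico.2 ⟨hix, by omega⟩)
  have hΔy : Δ (x + 1) < 0 := hneg (x + 1) (mem_Ico.2 ⟨le_rfl, hxn⟩)
  obtain ⟨hx, hy⟩ := mem_redSet_of_sign_change hxn hΔx hΔy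
  have hpq := hs.2.2 x hx (redDelta_pos (mem_range.2 (by omega)) hΔx)
    (fun z hz => le_of_redDelta_pos_of_neg_on_Ico hneg (mem_redSet.1 hz).1) (x + 1) hy
    fun z hz => le_of_mem_redSet_of_neg_on_Ico hneg hz
  linarith [sum_Ico_le_redDelta_add_redDelta hix hxn le_rfl hpos hneg (.inl rfl)]

theorem IsSinking.sub_one_neg (hs : IsSinking (range n) Δ) (hn : 0 < n) : Δ (n - 1) < 0 :=
  hs.1 (n - 1) (mem_range.2 (by omega)) fun x hx => by rw [mem_range] at hx; omega

theorem IsSinking.sum_Ico_neg (hs : IsSinking (range n) Δ) (hnz : ∀ k < n, Δ k ≠ 0) {i : ℕ}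
    (hi : i < n) : ∑ k ∈ Ico i n, Δ k < 0 := by
  have hlast := hs.sub_one_neg (by omega)
  induction hd : n - i using Nat.strong_induction_on generalizing i with
  | _ d ih =>
  subst hd
  rcases (hnz i hi).lt_or_gt with hneg | hpos
  · rw [sum_eq_sum_Ico_succ_bot hi]
    rcases (Nat.succ_le_of_lt hi).eq_or_lt with h | h
    · simp [← h, hneg]
    · linarith [ih _ (by omega) h rfl]
  · obtain ⟨x, e, hix, hxe, hen, hposrun, hnegrun, hend⟩ :=
      exists_pos_then_neg_run hnz hlast hi hpos
    rcases hen.eq_or_lt with rfl | hen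
    · exact hs.sum_Ico_neg_of_last_block hix hxe hposrun hnegrun
    · rw [← sum_Ico_consecutive Δ (by omega : i ≤ e) hen.le]
      linarith [hs.sum_Ico_nonpos hix hxe hen.le hposrun hnegrun hend, ih _ (by omega) hen rfl]

end Range

theorem stmt_8_general (n : ℕ) (Δ : ℕ → ℤ)
    (hnz : ∀ i < n, Δ i ≠ 0)
    (hsink : IsSinking (Finset.range n) Δ) :
    ∀ i < n, ∑ k ∈ Finset.range n, Δ k < ∑ k ∈ Finset.range i, Δ k := by
  intro i hi
  rw [← sum_range_add_sum_Ico Δ hi.le]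
  linarith [hsink.sum_Ico_neg hnz hi]

/-- the tau function of a sinking abstract delta sequence attains its minimum
at, and only at, its last argument: identifying `X` order-preservingly with `{0,…,n-1}`,
one has `τ_Δ(n) < τ_Δ(i)` for all `0 ≤ i ≤ n-1`, where `τ_Δ(i) = ∑_{k<i} Δ(k)`. -/
theorem stmt_8 (n : ℕ) (hn : 1 ≤ n) (Δ : ℕ → ℤ)
    (hnz : ∀ i < n, Δ i ≠ 0) (hpos : 0 < Δ 0)
    (hsink : IsSinking (Finset.range n) Δ) :
    ∀ i < n, ∑ k ∈ Finset.range n, Δ k < ∑ k ∈ Finset.range i, Δ k :=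
  stmt_8_general n Δ hnz hsink
end

section
/- Let p = 2ξ+1 ≥ 3 be odd, r₋ = p(2p−1), r₊ = p(2p+1), w = (2p−1)(2p+1), N_p = 4p³ − 8p² − p + 1, K = (ξ−1)(r₋+r₊), and let (X̃_{Y_p}, Δ̃_{Y_p}) be the reduced form of the abstract delta sequence of Σ(p,2p−1,2p+1). Then X̃_{Y_p} ∩ [K, N_p/2] has exactly 4ξ−1 elements, and if they are listed in increasing order, the corresponding sequence of values of Δ̃_{Y_p} equals the creature delta sequence Δ_{C_p}. -/
/-! The abstract delta sequence of the Brieskorn sphere `Y_p = Σ(p, 2p-1, 2p+1)`: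
`r₋ = p(2p-1)`, `r₊ = p(2p+1)`, `w = (2p-1)(2p+1)`, `N_p = 4p³ - 8p² - p + 1`,
`S_{Y_p} = S(r₋, r₊, w) ∩ [0, N_p]`, `Q_{Y_p} = {N_p - s : s ∈ S_{Y_p}}`,
`X_{Y_p} = S_{Y_p} ∪ Q_{Y_p}` and `Δ_{Y_p} = +1` on `S_{Y_p}`, `-1` on `Q_{Y_p}`. -/

def rMinus (p : ℕ) : ℕ := p * (2*p - 1)

def rPlus (p : ℕ) : ℕ := p * (2*p + 1)

def wP (p : ℕ) : ℕ := (2*p - 1) * (2*p + 1)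

def NP (p : ℕ) : ℕ := 4*p^3 - 8*p^2 - p + 1

open Classical in
noncomputable def SYp (p : ℕ) : Finset ℕ :=
  (Finset.range (NP p + 1)).filter
    (fun x => x ∈ AddSubmonoid.closure ({rMinus p, rPlus p, wP p} : Set ℕ))

noncomputable def QYp (p : ℕ) : Finset ℕ := (SYp p).image (fun s => NP p - s)

noncomputable def XYp (p : ℕ) : Finset ℕ := SYp p ∪ QYp p

noncomputable def ΔYp (p : ℕ) : ℕ → ℤ := fun x => if x ∈ SYp p then 1 else -1

/-- The creature delta sequence `Δ_{C_p}` for `p = 2ξ+1` (indexed by `1 ≤ i ≤ 4ξ-1`):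
`⟨ξ, -ξ, ξ-1, -(ξ-1), …, 2, -2, 1, -2, 1, -2, 2, …, -(ξ-1), ξ-1, -ξ, ξ⟩`; explicitly, for
`1 ≤ i ≤ ξ-1` the `(2i-1)`-st entry is `ξ+1-i` and the `(2i)`-th entry is `-(ξ+1-i)`, the
`(2ξ-1)`-st, `(2ξ)`-th, `(2ξ+1)`-st entries are `1, -2, 1`, and for `1 ≤ i ≤ ξ-1` the
`(2ξ+2i)`-th entry is `-(i+1)` and the `(2ξ+2i+1)`-st entry is `i+1`. -/
def creature (ξ : ℕ) (i : ℕ) : ℤ :=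
  if i ≤ 2*ξ - 2 then
    (if i % 2 = 1 then (ξ : ℤ) + 1 - (((i + 1) / 2 : ℕ) : ℤ)
     else -((ξ : ℤ) + 1 - ((i / 2 : ℕ) : ℤ)))
  else if i = 2*ξ - 1 then 1
  else if i = 2*ξ then -2
  else if i = 2*ξ + 1 then 1
  else
    (if i % 2 = 0 then -((((i - 2*ξ) / 2 : ℕ) : ℤ) + 1)
     else (((i - 2*ξ) / 2 : ℕ) : ℤ) + 1)


/-! With `p = 2m+3` (so `ξ = m+1`), a combination `a r₋ + b r₊ + c w` equals `2p²u + p(b-a) - c`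
with `u = a+b+2c`, so near `[K, N_p - K]` only `u ∈ {2m, 2m+1, 2m+2}` occur; this makes `S_{Y_p}`,
and through `s ↦ N_p - s` also `Q_{Y_p}`, explicit near `[K, N_p/2]`. There `X_{Y_p}` consists of
`4m+3` runs of alternating sign, of lengths `m+1, m+1, m, m, …, 1, 2, 1, 2, 2, 3, …, m+1, m+1`,
fenced on both sides by points of `Q_{Y_p}`. Runs of alternating sign fenced in this way determine
the reduced form run by run, and the signed run lengths are the creature sequence. -/

section RunDecomposition

variable {α : Type*} [LinearOrder α]

/-- `R 0 < R 1 < ⋯ < R n` are consecutive runs of `X` of alternating sign, positive for even `k`,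
and every element of `X` below `R 0` or above `R n` is separated from it by an element of the
opposite sign; `rep k` is the element of `R k` that the reduced form keeps. -/
structure IsRunDecomposition (X : Finset α) (Δ : α → ℤ) (n : ℕ) (R : ℕ → Finset α)
    (rep : ℕ → α) : Prop where
  mem : ∀ k ≤ n, ∀ y ∈ R k, y ∈ X
  pos_iff : ∀ k ≤ n, ∀ y ∈ R k, 0 < Δ y ↔ Even k
  ne_zero : ∀ y ∈ X, Δ y ≠ 0
  rep_mem : ∀ k ≤ n, rep k ∈ R k
  le_rep : ∀ k ≤ n, Even k → ∀ y ∈ R k, y ≤ rep k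
  rep_le : ∀ k ≤ n, ¬Even k → ∀ y ∈ R k, rep k ≤ y
  lt_of_mem_succ : ∀ k < n, ∀ a ∈ R k, ∀ b ∈ R (k + 1), a < b
  cover : ∀ z ∈ X, ∀ a ∈ R 0, ∀ b ∈ R n, a ≤ z → z ≤ b → ∃ k ≤ n, z ∈ R k
  below : ∀ z ∈ X, (∀ a ∈ R 0, z < a) → ∃ w ∈ X, z ≤ w ∧ (∀ a ∈ R 0, w < a) ∧ ¬0 < Δ w
  above : ∀ z ∈ X, (∀ b ∈ R n, b < z) →
    ∃ w ∈ X, w ≤ z ∧ (∀ b ∈ R n, b < w) ∧ ¬(0 < Δ w ↔ Even n)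

namespace IsRunDecomposition

variable {X : Finset α} {Δ : α → ℤ} {n : ℕ} {R : ℕ → Finset α} {rep : ℕ → α}
  (h : IsRunDecomposition X Δ n R rep)
include h

theorem lt_of_mem_of_lt {j k : ℕ} (hjk : j < k) (hk : k ≤ n) {a b : α} (ha : a ∈ R j)
    (hb : b ∈ R k) : a < b := by
  induction k generalizing b with
  | zero => omega
  | succ k ih =>
    rcases Nat.lt_succ_iff_lt_or_eq.1 hjk with hjk | rfl
    · exact (ih hjk (by omega) (h.rep_mem k (by omega))).trans
        (h.lt_of_mem_succ k (by omega) _ (h.rep_mem k (by omega)) b hb)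
    · exact h.lt_of_mem_succ j (by omega) a ha b hb

theorem lt_of_below {z : α} (hz : ∀ a ∈ R 0, z < a) {k : ℕ} (hk : k ≤ n) {x : α}
    (hx : x ∈ R k) : z < x := by
  rcases Nat.eq_zero_or_pos k with rfl | hk0
  · exact hz x hx
  · have h0 := h.rep_mem 0 (Nat.zero_le n)
    exact (hz _ h0).trans (h.lt_of_mem_of_lt hk0 hk h0 hx)

theorem lt_of_above {z : α} (hz : ∀ b ∈ R n, b < z) {k : ℕ} (hk : k ≤ n) {x : α}
    (hx : x ∈ R k) : x < z := by
  rcases hk.lt_or_eq with hkn | rfl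
  · have hn := h.rep_mem n le_rfl
    exact (h.lt_of_mem_of_lt hkn le_rfl hx hn).trans (hz _ hn)
  · exact hz x hx

theorem locate {z : α} (hz : z ∈ X) :
    (∀ a ∈ R 0, z < a) ∨ (∀ b ∈ R n, b < z) ∨ ∃ k ≤ n, z ∈ R k := by
  by_cases hlow : ∀ a ∈ R 0, z < a
  · exact Or.inl hlow
  by_cases hhigh : ∀ b ∈ R n, b < z
  · exact Or.inr (Or.inl hhigh)
  push Not at hlow hhigh
  obtain ⟨a, ha, haz⟩ := hlow
  obtain ⟨b, hb, hzb⟩ := hhigh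
  exact Or.inr (Or.inr (h.cover z hz a ha b hb haz hzb))

theorem pos_iff_of_mem_of_mem {k : ℕ} (hk : k ≤ n) {x y z : α} (hx : x ∈ R k) (hy : y ∈ R k)
    (hz : z ∈ X) (h1 : min x y ≤ z) (h2 : z ≤ max x y) : 0 < Δ z ↔ Even k := by
  rcases h.locate hz with hlow | hhigh | ⟨j, hj, hzj⟩
  · exact absurd h1 (not_le.2 (lt_min (h.lt_of_below hlow hk hx) (h.lt_of_below hlow hk hy)))
  · exact absurd h2 (not_le.2 (max_lt (h.lt_of_above hhigh hk hx) (h.lt_of_above hhigh hk hy)))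
  · rcases lt_trichotomy j k with hjk | rfl | hjk
    · exact absurd h1 (not_le.2 (lt_min (h.lt_of_mem_of_lt hjk hk hzj hx)
        (h.lt_of_mem_of_lt hjk hk hzj hy)))
    · exact h.pos_iff j hj z hzj
    · exact absurd h2 (not_le.2 (max_lt (h.lt_of_mem_of_lt hjk hj hx hzj)
        (h.lt_of_mem_of_lt hjk hj hy hzj)))

section SameSign

variable {k : ℕ} (hk : k ≤ n) {x y : α} (hx : x ∈ R k)
  (same : ∀ z ∈ X, min x y ≤ z → z ≤ max x y → (0 < Δ z ↔ Even k))
include hk hx same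

theorem not_below (hlow : ∀ a ∈ R 0, y < a) (hy : y ∈ X) : False := by
  obtain ⟨w, hwX, hyw, hw0, hw⟩ := h.below y hy hlow
  by_cases hke : Even k
  · exact hw ((same w hwX (min_le_of_right_le hyw)
      (le_max_of_le_left (h.lt_of_below hw0 hk hx).le)).2 hke)
  · have h0 := h.rep_mem 0 (Nat.zero_le n)
    have hk0 : 0 < k := Nat.pos_of_ne_zero (by rintro rfl; exact hke ⟨0, rfl⟩)
    exact hke ((same _ (h.mem 0 (Nat.zero_le n) _ h0) (min_le_of_right_le (hlow _ h0).le)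
      (le_max_of_le_left (h.lt_of_mem_of_lt hk0 hk h0 hx).le)).1
      ((h.pos_iff 0 (Nat.zero_le n) _ h0).2 ⟨0, rfl⟩))

theorem not_above (hhigh : ∀ b ∈ R n, b < y) (hy : y ∈ X) : False := by
  obtain ⟨w, hwX, hwy, hw0, hw⟩ := h.above y hy hhigh
  by_cases hkn : Even k ↔ Even n
  · exact hw ((same w hwX (min_le_of_left_le (h.lt_of_above hw0 hk hx).le)
      (le_max_of_le_right hwy)).trans hkn)
  · have hn := h.rep_mem n le_rfl
    have hkn' : k < n := lt_of_le_of_ne hk (by rintro rfl; exact hkn Iff.rfl)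
    exact hkn ((h.pos_iff n le_rfl _ hn).symm.trans (same _ (h.mem n le_rfl _ hn)
      (min_le_of_left_le (h.lt_of_mem_of_lt hkn' le_rfl hx hn).le)
      (le_max_of_le_right (hhigh _ hn).le))).symm

/-- Equal parity rules out `j = k ± 1`, and the run `R (j ± 1)` in between has the other sign. -/
theorem eq_of_mem {j : ℕ} (hj : j ≤ n) (hy : y ∈ R j) : j = k := by
  have parity : ∀ i ≤ n, ∀ c ∈ R i, min x y ≤ c → c ≤ max x y → (Even i ↔ Even k) :=
    fun i hi c hc h1 h2 => (h.pos_iff i hi c hc).symm.trans (same c (h.mem i hi c hc) h1 h2)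
  have hjk := parity j hj y hy (min_le_right x y) (le_max_right x y)
  rcases lt_trichotomy j k with hlt | rfl | hlt
  · have hj1 : j + 1 < k := lt_of_le_of_ne hlt (by
      rintro rfl; rw [Nat.even_add_one] at hjk; tauto)
    have hc := h.rep_mem (j + 1) (by omega)
    have := parity (j + 1) (by omega) _ hc
      (min_le_of_right_le (h.lt_of_mem_of_lt (Nat.lt_succ_self j) (by omega) hy hc).le)
      (le_max_of_le_left (h.lt_of_mem_of_lt hj1 hk hc hx).le)
    rw [Nat.even_add_one] at this
    tauto
  · rfl
  · have hk1 : k + 1 < j := lt_of_le_of_ne hlt (by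
      rintro rfl; rw [Nat.even_add_one] at hjk; tauto)
    have hc := h.rep_mem (k + 1) (by omega)
    have := parity (k + 1) (by omega) _ hc
      (min_le_of_left_le (h.lt_of_mem_of_lt (Nat.lt_succ_self k) (by omega) hx hc).le)
      (le_max_of_le_right (h.lt_of_mem_of_lt hk1 hj hc hy).le)
    rw [Nat.even_add_one] at this
    tauto

end SameSign

theorem dsRun_eq {k : ℕ} (hk : k ≤ n) {x : α} (hx : x ∈ R k) : dsRun X Δ x = R k := by
  have hxk := h.pos_iff k hk x hx
  ext y
  simp only [dsRun, Finset.mem_filter, hxk]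
  refine ⟨fun ⟨hyX, same⟩ => ?_, fun hy => ⟨h.mem k hk y hy, fun z hz h1 h2 =>
    h.pos_iff_of_mem_of_mem hk hx hy hz h1 h2⟩⟩
  rcases h.locate hyX with hlow | hhigh | ⟨j, hj, hyj⟩
  · exact (h.not_below hk hx same hlow hyX).elim
  · exact (h.not_above hk hx same hhigh hyX).elim
  · exact h.eq_of_mem hk hx same hj hyj ▸ hyj

theorem redDelta_eq {k : ℕ} (hk : k ≤ n) {x : α} (hx : x ∈ R k) :
    redDelta X Δ x = ∑ y ∈ R k, Δ y := by
  rw [redDelta, h.dsRun_eq hk hx]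

theorem mem_redSet_iff {k : ℕ} (hk : k ≤ n) {x : α} (hx : x ∈ R k) :
    x ∈ redSet X Δ ↔ x = rep k := by
  have hpos := h.pos_iff k hk x hx
  have hne := h.ne_zero x (h.mem k hk x hx)
  simp only [redSet, Finset.mem_filter, h.dsRun_eq hk hx, h.mem k hk x hx, true_and]
  by_cases hke : Even k
  · have : ¬Δ x < 0 := not_lt.2 (hpos.2 hke).le
    simp only [hpos.2 hke, this, true_and, false_and, or_false]
    exact ⟨fun hle => le_antisymm (h.le_rep k hk hke x hx) (hle _ (h.rep_mem k hk)),
      fun hxr => hxr ▸ h.le_rep k hk hke⟩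
  · have : Δ x < 0 := lt_of_le_of_ne (not_lt.1 (mt hpos.1 hke)) hne
    simp only [mt hpos.1 hke, this, true_and, false_and, false_or]
    exact ⟨fun hle => le_antisymm (hle _ (h.rep_mem k hk)) (h.rep_le k hk hke x hx),
      fun hxr => hxr ▸ h.rep_le k hk hke⟩

end IsRunDecomposition

end RunDecomposition

theorem AddSubmonoid.mem_closure_triple {A : Type*} [AddCommMonoid A] (a b c x : A) :
    x ∈ closure ({a, b, c} : Set A) ↔ ∃ i j k : ℕ, i • a + j • b + k • c = x := by
  rw [← Set.singleton_union, closure_union, mem_sup]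
  simp only [mem_closure_singleton, mem_closure_pair]
  constructor
  · rintro ⟨_, ⟨i, rfl⟩, _, ⟨j, k, rfl⟩, rfl⟩
    exact ⟨i, j, k, add_assoc _ _ _⟩
  · rintro ⟨i, j, k, rfl⟩
    exact ⟨_, ⟨i, rfl⟩, _, ⟨j, k, rfl⟩, (add_assoc _ _ _).symm⟩

theorem mod_eq_of_mul_add_eq {P i i' x y : ℕ} (hx : x < P) (hy : y < P)
    (h : P*i + x = P*i' + y) : x = y := by
  have := congrArg (· % P) h
  simpa [Nat.mul_add_mod, Nat.mod_eq_of_lt hx, Nat.mod_eq_of_lt hy] using this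

theorem le_NP_of_mem_SYp {p s : ℕ} (hs : s ∈ SYp p) : s ≤ NP p := by
  classical
  simp only [SYp, Finset.mem_filter, Finset.mem_range] at hs
  omega

theorem mem_QYp_iff {p z : ℕ} : z ∈ QYp p ↔ z ≤ NP p ∧ NP p - z ∈ SYp p := by
  rw [QYp, Finset.mem_image]
  constructor
  · rintro ⟨s, hs, rfl⟩
    have := le_NP_of_mem_SYp hs
    rw [Nat.sub_sub_self this]
    exact ⟨Nat.sub_le _ _, hs⟩
  · rintro ⟨hz, hs⟩
    exact ⟨_, hs, Nat.sub_sub_self hz⟩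

theorem ΔYp_pos_iff {p y : ℕ} : 0 < ΔYp p y ↔ y ∈ SYp p := by
  unfold ΔYp
  split_ifs with h <;> simp [h]

namespace Brieskorn

/-! Throughout, `p = 2m+3` (so `ξ = m+1`), `K m = (ξ-1)(r₋+r₊)` and `N m = N_p`. In terms of `p`,
`topA i = K + 2pi`, `botB i = topA i + p + 1`, `G = K + p² + p + 1`, `topC i = K + p(p+2) + 2pi`,
`botD i = topC i + p + 1` and `E = K + 2p² + 1`. Above `K - (m+1)` (a point of `Q_{Y_p}` when
`m ≥ 1`) and below `E ∈ Q_{Y_p}`, `X_{Y_p}` is the union of the runs `block m k`: first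
`[topA i - (m-i), topA i] ⊆ S` alternating with `[botB i, botB i + (m-i)] ⊆ Q` for `i ≤ m` (the
last of these enlarged to `{botB m, G}`), then `[topC i - i, topC i] ⊆ S` for `i ≤ m` alternating
with `[botD i, botD i + i + 1] ⊆ Q` for `i < m`. -/

def K (m : ℕ) : ℕ := 16*m*m*m + 48*m*m + 36*m

theorem le_K (m : ℕ) : 36*m ≤ K m := by
  simp only [K]
  omega

def N (m : ℕ) : ℕ := 2*K m + 16*(m*m) + 46*m + 34

def topA (m i : ℕ) : ℕ := K m + (4*m+6)*i

def botB (m i : ℕ) : ℕ := topA m i + (2*m+4)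

def G (m : ℕ) : ℕ := K m + 4*(m*m) + 14*m + 13

def topC (m i : ℕ) : ℕ := K m + 4*(m*m) + 16*m + 15 + (4*m+6)*i

def botD (m i : ℕ) : ℕ := topC m i + (2*m+4)

def E (m : ℕ) : ℕ := K m + 8*(m*m) + 24*m + 19

theorem NP_eq (m : ℕ) : NP (2*m+3) = N m := by
  have h1 : 4*(2*m+3)^3 = 32*(m*m*m)+144*(m*m)+216*m+108 := by ring
  have h2 : 8*(2*m+3)^2 = 32*(m*m)+96*m+72 := by ring
  have h3 : 16*m*m*m = 16*(m*m*m) := by ring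
  have h4 : 48*m*m = 48*(m*m) := by ring
  simp only [NP, N, K]
  omega

theorem rMinus_eq (m : ℕ) : rMinus (2*m+3) = 8*m*m+22*m+15 := by
  rw [rMinus, show 2*(2*m+3) - 1 = 4*m+5 by omega]
  ring

theorem rPlus_eq (m : ℕ) : rPlus (2*m+3) = 8*m*m+26*m+21 := by
  rw [rPlus]
  ring

theorem wP_eq (m : ℕ) : wP (2*m+3) = 16*m*m+48*m+35 := by
  rw [wP, show 2*(2*m+3) - 1 = 4*m+5 by omega]
  ring

theorem mem_SYp_iff (m x : ℕ) : x ∈ SYp (2*m+3) ↔ x ≤ N m ∧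
    ∃ a b c : ℕ, x = a*(8*m*m+22*m+15) + b*(8*m*m+26*m+21) + c*(16*m*m+48*m+35) := by
  classical
  simp only [SYp, Finset.mem_filter, Finset.mem_range, Nat.lt_succ_iff, NP_eq, rMinus_eq,
    rPlus_eq, wP_eq, AddSubmonoid.mem_closure_triple, smul_eq_mul, eq_comm (b := x)]

theorem sum_coeff_bounds {m a b c n : ℕ}
    (hn : n = a*(8*m*m+22*m+15) + b*(8*m*m+26*m+21) + c*(16*m*m+48*m+35))
    (hlo : K m ≤ n + (m+1)) (hhi : n + K m ≤ N m + (m+1)) :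
    2*m ≤ a+b+2*c ∧ a+b+2*c ≤ 2*m+2 := by
  simp only [N, K] at hlo hhi
  have hlow : 2*n = (a+b+2*c)*(16*m*m+44*m+30) + b*(8*m+12) + c*(8*m+10) := by
    rw [hn]; ring
  have hup : 2*n + a*(8*m+12) + c*(8*m+14) = (a+b+2*c)*(16*m*m+52*m+42) := by
    rw [hn]; ring
  constructor
  · by_contra! h
    have h1 : (a+b+2*c+1)*(16*m*m+52*m+42) ≤ (2*m)*(16*m*m+52*m+42) :=
      Nat.mul_le_mul_right _ h
    nlinarith [Nat.zero_le (a*(8*m+12)), Nat.zero_le (c*(8*m+14))]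
  · by_contra! h
    have h1 : (2*m+3)*(16*m*m+44*m+30) ≤ (a+b+2*c)*(16*m*m+44*m+30) :=
      Nat.mul_le_mul_right _ h
    nlinarith [Nat.zero_le (b*(8*m+12)), Nat.zero_le (c*(8*m+10))]

section CoefficientSum

-- `a r₋ + b r₊ + c w = 2p²(a+b+2c) + p(b-a) - c` with `p = 2m+3`
variable {m a b c n : ℕ}
  (key : n + c + (2*m+3)*a = (8*m*m+24*m+18)*(a+b+2*c) + (2*m+3)*b)
include key

theorem shape_of_sum_eq_two_mul (hu : a+b+2*c = 2*m) (hlo : K m ≤ n + (m+1)) :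
    ∃ i j, i + j ≤ m ∧ n + j = topA m i := by
  simp only [topA, K] at hlo ⊢
  have : (8*m*m+24*m+18)*(a+b+2*c) = 16*m*m*m+48*m*m+36*m := by rw [hu]; ring
  have hab : a ≤ b := by
    by_contra! h
    have : (2*m+3)*(b+1) ≤ (2*m+3)*a := Nat.mul_le_mul_left _ h
    nlinarith
  obtain ⟨i, hb, hi⟩ : ∃ i, b = a + 2*i ∧ i + c + a = m := ⟨m - c - a, by omega, by omega⟩
  have : (2*m+3)*b = (2*m+3)*a + (4*m+6)*i := by rw [hb]; ring
  exact ⟨i, c, by omega, by linarith⟩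

theorem shape_of_sum_eq_two_mul_add_one (hu : a+b+2*c = 2*m+1) :
    (∃ i j, i ≤ m ∧ j ≤ i ∧ n + j = topC m i) ∨
    (∃ i j, i ≤ m ∧ j ≤ i ∧ n + j + (4*m+6)*i = K m + 12*(m*m)+32*m+21) := by
  simp only [topC, K]
  have : (8*m*m+24*m+18)*(a+b+2*c) = 16*m*m*m+56*m*m+60*m+18 := by rw [hu]; ring
  rcases Nat.lt_or_ge a b with hab | hab
  · have : (2*m+3)*(b+2*(a+c)) = (2*m+3)*(a+(2*m+1)) := by congr 1; omega
    have : (2*m+3)*(b+2*(a+c)) = (2*m+3)*b + (4*m+6)*(a+c) := by ring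
    have : (2*m+3)*(a+(2*m+1)) = (2*m+3)*a + 4*(m*m)+8*m+3 := by ring
    have : (16*m*m*m:ℕ)+56*m*m+60*m+18 + 4*(m*m)+8*m+3 = 16*m*m*m+60*(m*m)+68*m+21 := by ring
    exact Or.inr ⟨a + c, c, by omega, by omega, by linarith⟩
  · have : (2*m+3)*(a+2*(b+c)) = (2*m+3)*(b+(2*m+1)) := by congr 1; omega
    have : (2*m+3)*(a+2*(b+c)) = (2*m+3)*a + (4*m+6)*(b+c) := by ring
    have : (2*m+3)*(b+(2*m+1)) = (2*m+3)*b + 4*(m*m)+8*m+3 := by ring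
    have : (16*m*m*m:ℕ)+56*m*m+60*m+18 = 16*m*m*m+52*(m*m)+52*m+15 + 4*(m*m)+8*m+3 := by ring
    exact Or.inl ⟨b + c, c, by omega, by omega, by linarith⟩

theorem shape_of_sum_eq_two_mul_add_two (hu : a+b+2*c = 2*m+2)
    (hhi : n + K m ≤ N m + (m+1)) :
    ∃ i j, i + j ≤ m+1 ∧ n + j + (4*m+6)*i = K m + 16*(m*m)+48*m+36 := by
  simp only [N, K] at hhi ⊢
  have : (8*m*m+24*m+18)*(a+b+2*c) = 16*m*m*m+64*m*m+84*m+36 := by rw [hu]; ring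
  have hba : b ≤ a := by
    by_contra! h
    have : (2*m+3)*(a+1) ≤ (2*m+3)*b := Nat.mul_le_mul_left _ h
    nlinarith
  obtain ⟨i, ha, hi⟩ : ∃ i, a = b + 2*i ∧ i + c + b = m+1 := ⟨m+1 - c - b, by omega, by omega⟩
  have : (2*m+3)*a = (2*m+3)*b + (4*m+6)*i := by rw [ha]; ring
  exact ⟨i, c, by omega, by linarith⟩

end CoefficientSum

theorem cases_of_mem_SYp {m n : ℕ} (hS : n ∈ SYp (2*m+3)) (hlo : K m ≤ n + (m+1))
    (hhi : n + K m ≤ N m + (m+1)) :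
    (∃ i j, i + j ≤ m ∧ n + j = topA m i) ∨
    (∃ i j, i ≤ m ∧ j ≤ i ∧ n + j = topC m i) ∨
    (∃ i j, i ≤ m ∧ j ≤ i ∧ n + j + (4*m+6)*i = K m + 12*(m*m)+32*m+21) ∨
    (∃ i j, i + j ≤ m+1 ∧ n + j + (4*m+6)*i = K m + 16*(m*m)+48*m+36) := by
  obtain ⟨-, a, b, c, hn⟩ := (mem_SYp_iff m n).1 hS
  have key : n + c + (2*m+3)*a = (8*m*m+24*m+18)*(a+b+2*c) + (2*m+3)*b := by rw [hn]; ring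
  obtain ⟨hu1, hu2⟩ := sum_coeff_bounds hn hlo hhi
  rcases (show a+b+2*c = 2*m ∨ a+b+2*c = 2*m+1 ∨ a+b+2*c = 2*m+2 by omega) with hu | hu | hu
  · exact Or.inl (shape_of_sum_eq_two_mul key hu hlo)
  · exact Or.inr ((shape_of_sum_eq_two_mul_add_one key hu).imp_right Or.inl)
  · exact Or.inr (Or.inr (Or.inr (shape_of_sum_eq_two_mul_add_two key hu hhi)))

theorem mem_SYp_of_cases {m n : ℕ} (hN : n ≤ N m) :
    ((∃ i j, i + j ≤ m ∧ n + j = topA m i) ∨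
    (∃ i j, i ≤ m ∧ j ≤ i ∧ n + j = topC m i) ∨
    (∃ i j, i ≤ m ∧ j ≤ i ∧ n + j + (4*m+6)*i = K m + 12*(m*m)+32*m+21) ∨
    (∃ i j, i + j ≤ m+1 ∧ n + j + (4*m+6)*i = K m + 16*(m*m)+48*m+36)) → n ∈ SYp (2*m+3) := by
  refine fun h => (mem_SYp_iff m n).2 ⟨hN, ?_⟩
  simp only [topA, topC, K] at h
  rcases h with ⟨i, j, hij, h⟩ | ⟨i, j, hi, hj, h⟩ | ⟨i, j, hi, hj, h⟩ | ⟨i, j, hij, h⟩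
  · obtain ⟨a, ha⟩ : ∃ a, a + i + j = m := ⟨m - i - j, by omega⟩
    refine ⟨a, a + 2*i, j, ?_⟩
    have : (a+i+j)*(16*m*m+48*m+36) = m*(16*m*m+48*m+36) := by rw [ha]
    linarith
  · obtain ⟨a, ha⟩ : ∃ a, a + (i + j) = 2*m+1 := ⟨2*m+1 - i - j, by omega⟩
    obtain ⟨b, hb⟩ : ∃ b, b + j = i := ⟨i - j, by omega⟩
    refine ⟨a, b, j, ?_⟩
    have : (a+(i+j))*(8*m*m+22*m+15) = (2*m+1)*(8*m*m+22*m+15) := by rw [ha]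
    have : (b+j)*(8*m*m+26*m+21) = i*(8*m*m+26*m+21) := by rw [hb]
    linarith
  · obtain ⟨a, ha⟩ : ∃ a, a + j = i := ⟨i - j, by omega⟩
    obtain ⟨b, hb⟩ : ∃ b, b + (i + j) = 2*m+1 := ⟨2*m+1 - i - j, by omega⟩
    refine ⟨a, b, j, ?_⟩
    have : (a+j)*(8*m*m+22*m+15) = i*(8*m*m+22*m+15) := by rw [ha]
    have : (b+(i+j))*(8*m*m+26*m+21) = (2*m+1)*(8*m*m+26*m+21) := by rw [hb]
    linarith
  · obtain ⟨b, hb⟩ : ∃ b, b + (i + j) = m+1 := ⟨m+1 - i - j, by omega⟩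
    refine ⟨b + 2*i, b, j, ?_⟩
    have : (b+(i+j))*(16*m*m+48*m+36) = (m+1)*(16*m*m+48*m+36) := by rw [hb]
    linarith

def blockA (m i : ℕ) : Finset ℕ := Finset.Icc (topA m i - (m - i)) (topA m i)

def blockB (m i : ℕ) : Finset ℕ := Finset.Icc (botB m i) (botB m i + (m - i))

def blockC (m i : ℕ) : Finset ℕ := Finset.Icc (topC m i - i) (topC m i)

def blockD (m i : ℕ) : Finset ℕ := Finset.Icc (botD m i) (botD m i + (i + 1))

theorem mem_blockA_or_mem_blockC {m n : ℕ} (hS : n ∈ SYp (2*m+3)) (hlo : K m ≤ n + (m+1))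
    (hhi : n ≤ E m) : (∃ i ≤ m, n ∈ blockA m i) ∨ (∃ i ≤ m, n ∈ blockC m i) := by
  have hm : (4*m+6)*m = 4*(m*m)+6*m := by ring
  simp only [E] at hhi
  rcases cases_of_mem_SYp hS hlo (by simp only [N]; omega) with
    ⟨i, j, hij, h⟩ | ⟨i, j, hi, hj, h⟩ | ⟨i, j, hi, hj, h⟩ | ⟨i, j, hij, h⟩
  · exact Or.inl ⟨i, by omega, by simp only [blockA, Finset.mem_Icc]; omega⟩
  · exact Or.inr ⟨i, hi, by simp only [blockC, Finset.mem_Icc]; omega⟩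
  · have := Nat.mul_le_mul_left (4*m+6) hi
    omega
  · have := Nat.mul_le_mul_left (4*m+6) (show i ≤ m+1 by omega)
    have : (4*m+6)*(m+1) = 4*(m*m)+10*m+6 := by ring
    omega

theorem cases_of_mem_QYp {m z : ℕ} (hQ : z ∈ QYp (2*m+3)) (hlo : K m ≤ z + (m+1))
    (hhi : z ≤ E m) :
    z + (m+1) = K m ∨ (∃ i ≤ m, z ∈ blockB m i) ∨ z = G m ∨ (∃ i < m, z ∈ blockD m i) ∨
      z = E m := by
  rw [mem_QYp_iff, NP_eq] at hQ
  obtain ⟨hzN, hs⟩ := hQ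
  have hm : (4*m+6)*m = 4*(m*m)+6*m := by ring
  have hN : N m = 2*K m + 16*(m*m) + 46*m + 34 := rfl
  simp only [E] at hhi
  rcases cases_of_mem_SYp hs (by omega) (by omega) with
    ⟨i, j, hij, h⟩ | ⟨i, j, hi, hj, h⟩ | ⟨i, j, hi, hj, h⟩ | ⟨i, j, hij, h⟩
  · have := Nat.mul_le_mul_left (4*m+6) (show i ≤ m by omega)
    simp only [topA] at h
    omega
  · have := Nat.mul_le_mul_left (4*m+6) hi
    simp only [topC] at h
    have him : i = m := le_antisymm hi (Nat.le_of_mul_le_mul_left (by omega) (by omega : 0 < 4*m+6))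
    subst him
    simp only [E]
    omega
  · rcases i with _ | i
    · simp only [G]
      omega
    · have := Nat.mul_le_mul_left (4*m+6) hi
      have := mul_add_one (4*m+6) i
      refine Or.inr (Or.inr (Or.inr (Or.inl ⟨i, by omega, ?_⟩)))
      simp only [blockD, botD, topC, Finset.mem_Icc]
      omega
  · rcases i with _ | i
    · omega
    · have := Nat.mul_le_mul_left (4*m+6) (show i + 1 ≤ m + 1 by omega)
      have := mul_add_one (4*m+6) i
      refine Or.inr (Or.inl ⟨i, by omega, ?_⟩)
      simp only [blockB, botB, topA, Finset.mem_Icc]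
      omega

theorem mem_SYp_of_mem_blockA {m i y : ℕ} (hi : i ≤ m) (hy : y ∈ blockA m i) :
    y ∈ SYp (2*m+3) := by
  simp only [blockA, topA, Finset.mem_Icc] at hy
  have := Nat.mul_le_mul_left (4*m+6) hi
  have : (4*m+6)*m = 4*(m*m)+6*m := by ring
  exact mem_SYp_of_cases (by simp only [N]; omega)
    (Or.inl ⟨i, topA m i - y, by simp only [topA]; omega, by simp only [topA]; omega⟩)

theorem mem_SYp_of_mem_blockC {m i y : ℕ} (hi : i ≤ m) (hy : y ∈ blockC m i) :
    y ∈ SYp (2*m+3) := by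
  simp only [blockC, topC, Finset.mem_Icc] at hy
  have := Nat.mul_le_mul_left (4*m+6) hi
  have : (4*m+6)*m = 4*(m*m)+6*m := by ring
  exact mem_SYp_of_cases (by simp only [N]; omega)
    (Or.inr (Or.inl ⟨i, topC m i - y, hi, by simp only [topC]; omega, by simp only [topC]; omega⟩))

theorem mem_QYp_of_mem_blockB {m i y : ℕ} (hi : i ≤ m) (hy : y ∈ blockB m i) :
    y ∈ QYp (2*m+3) := by
  simp only [blockB, botB, topA, Finset.mem_Icc] at hy
  have := Nat.mul_le_mul_left (4*m+6) hi
  have : (4*m+6)*m = 4*(m*m)+6*m := by ring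
  have := mul_add_one (4*m+6) i
  have hN : N m = 2*K m + 16*(m*m) + 46*m + 34 := rfl
  rw [mem_QYp_iff, NP_eq]
  exact ⟨by omega, mem_SYp_of_cases (by omega)
    (Or.inr (Or.inr (Or.inr ⟨i+1, y - (K m + (4*m+6)*i + (2*m+4)), by omega, by omega⟩)))⟩

theorem mem_QYp_of_mem_blockD {m i y : ℕ} (hi : i < m) (hy : y ∈ blockD m i) :
    y ∈ QYp (2*m+3) := by
  simp only [blockD, botD, topC, Finset.mem_Icc] at hy
  have := Nat.mul_le_mul_left (4*m+6) (show i + 1 ≤ m from hi)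
  have : (4*m+6)*m = 4*(m*m)+6*m := by ring
  have := mul_add_one (4*m+6) i
  have hN : N m = 2*K m + 16*(m*m) + 46*m + 34 := rfl
  rw [mem_QYp_iff, NP_eq]
  exact ⟨by omega, mem_SYp_of_cases (by omega) (Or.inr (Or.inr (Or.inl
    ⟨i+1, y - (K m + 4*(m*m) + 16*m + 15 + (4*m+6)*i + (2*m+4)), hi, by omega, by omega⟩)))⟩

theorem G_mem_QYp (m : ℕ) : G m ∈ QYp (2*m+3) := by
  have hN : N m = 2*K m + 16*(m*m) + 46*m + 34 := rfl
  rw [mem_QYp_iff, NP_eq]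
  exact ⟨by simp only [G]; omega, mem_SYp_of_cases (by simp only [G]; omega)
    (Or.inr (Or.inr (Or.inl ⟨0, 0, by omega, by omega, by simp only [G]; omega⟩)))⟩

theorem E_mem_QYp (m : ℕ) : E m ∈ QYp (2*m+3) := by
  have hN : N m = 2*K m + 16*(m*m) + 46*m + 34 := rfl
  have : (4*m+6)*m = 4*(m*m)+6*m := by ring
  rw [mem_QYp_iff, NP_eq]
  exact ⟨by simp only [E]; omega, mem_SYp_of_cases (by simp only [E]; omega)
    (Or.inr (Or.inl ⟨m, 0, le_rfl, Nat.zero_le m, by simp only [E, topC]; omega⟩))⟩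

theorem sub_mem_QYp {m : ℕ} (hm : 1 ≤ m) : K m - (m+1) ∈ QYp (2*m+3) := by
  have hN : N m = 2*K m + 16*(m*m) + 46*m + 34 := rfl
  have := le_K m
  rw [mem_QYp_iff, NP_eq]
  exact ⟨by omega, mem_SYp_of_cases (by omega)
    (Or.inr (Or.inr (Or.inr ⟨0, m+1, by omega, by omega⟩)))⟩

theorem notMem_SYp {m y : ℕ} (hlo : K m ≤ y + (m+1)) (hhi : y ≤ E m)
    (hA : ∀ i ≤ m, y ∉ blockA m i) (hC : ∀ i ≤ m, y ∉ blockC m i) : y ∉ SYp (2*m+3) := by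
  intro hS
  rcases mem_blockA_or_mem_blockC hS hlo hhi with ⟨i, hi, hy⟩ | ⟨i, hi, hy⟩
  exacts [hA i hi hy, hC i hi hy]

theorem notMem_SYp_of_mem_blockB {m i y : ℕ} (hi : i ≤ m) (hy : y ∈ blockB m i) :
    y ∉ SYp (2*m+3) := by
  simp only [blockB, botB, topA, Finset.mem_Icc] at hy
  have := Nat.mul_le_mul_left (4*m+6) hi
  have : (4*m+6)*m = 4*(m*m)+6*m := by ring
  refine notMem_SYp (by omega) (by simp only [E]; omega) (fun i' hi' hA => ?_) (fun i' hi' hC => ?_)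
  · simp only [blockA, topA, Finset.mem_Icc] at hA
    have := mod_eq_of_mul_add_eq (P := 4*m+6) (i := i) (i' := i') (y := 0)
      (x := y - (K m + (4*m+6)*i) + (K m + (4*m+6)*i' - y)) (by omega) (by omega) (by omega)
    omega
  · simp only [blockC, topC, Finset.mem_Icc] at hC
    have : (4*m+6)*(i'+m+2) = (4*m+6)*i' + (4*(m*m)+14*m+12) := by ring
    have := mod_eq_of_mul_add_eq (P := 4*m+6) (i := i) (i' := i'+m+2) (y := 2*m+3)
      (x := y - (K m + (4*m+6)*i) + (K m + 4*(m*m)+16*m+15 + (4*m+6)*i' - y))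
      (by omega) (by omega) (by omega)
    omega

theorem G_notMem_SYp (m : ℕ) : G m ∉ SYp (2*m+3) := by
  refine notMem_SYp (by simp only [G]; omega) (by simp only [G, E]; omega)
    (fun i' hi' hA => ?_) (fun i' hi' hC => ?_)
  · simp only [blockA, topA, G, Finset.mem_Icc] at hA
    have : (4*m+6)*(m+2) = 4*(m*m)+14*m+12 := by ring
    have := mod_eq_of_mul_add_eq (P := 4*m+6) (i := m+2) (i' := i') (y := 0)
      (x := 1 + (K m + (4*m+6)*i' - (K m + 4*(m*m)+14*m+13))) (by omega) (by omega) (by omega)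
    omega
  · simp only [blockC, topC, G, Finset.mem_Icc] at hC
    omega

theorem notMem_SYp_of_mem_blockD {m i y : ℕ} (hi : i < m) (hy : y ∈ blockD m i) :
    y ∉ SYp (2*m+3) := by
  simp only [blockD, botD, topC, Finset.mem_Icc] at hy
  have := Nat.mul_le_mul_left (4*m+6) (show i + 1 ≤ m from hi)
  have : (4*m+6)*m = 4*(m*m)+6*m := by ring
  have := mul_add_one (4*m+6) i
  refine notMem_SYp (by omega) (by simp only [E]; omega) (fun i' hi' hA => ?_) (fun i' hi' hC => ?_)
  · simp only [blockA, topA, Finset.mem_Icc] at hA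
    have := Nat.mul_le_mul_left (4*m+6) hi'
    omega
  · simp only [blockC, topC, Finset.mem_Icc] at hC
    have := mod_eq_of_mul_add_eq (P := 4*m+6) (i := i) (i' := i') (y := 0)
      (x := y - (K m + 4*(m*m)+16*m+15 + (4*m+6)*i) + (K m + 4*(m*m)+16*m+15 + (4*m+6)*i' - y))
      (by omega) (by omega) (by omega)
    omega

theorem E_notMem_SYp (m : ℕ) : E m ∉ SYp (2*m+3) := by
  refine notMem_SYp (by simp only [E]; omega) le_rfl (fun i' hi' hA => ?_) (fun i' hi' hC => ?_)
  all_goals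
    have := Nat.mul_le_mul_left (4*m+6) hi'
    have : (4*m+6)*m = 4*(m*m)+6*m := by ring
  · simp only [blockA, topA, E, Finset.mem_Icc] at hA
    omega
  · simp only [blockC, topC, E, Finset.mem_Icc] at hC
    omega

theorem sub_notMem_SYp {m : ℕ} (hm : 1 ≤ m) : K m - (m+1) ∉ SYp (2*m+3) := by
  have := le_K m
  refine notMem_SYp (by omega) (by simp only [E]; omega) (fun i' hi' hA => ?_) (fun i' hi' hC => ?_)
  · simp only [blockA, topA, Finset.mem_Icc] at hA
    omega
  · simp only [blockC, topC, Finset.mem_Icc] at hC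
    omega

def block (m k : ℕ) : Finset ℕ :=
  if k < 2*m+2 then
    if Even k then blockA m (k/2)
    else if k = 2*m+1 then insert (G m) (blockB m m) else blockB m (k/2)
  else if Even k then blockC m (k/2 - (m+1)) else blockD m (k/2 - (m+1))

def rep (m k : ℕ) : ℕ :=
  if k < 2*m+2 then (if Even k then topA m (k/2) else botB m (k/2))
  else if Even k then topC m (k/2 - (m+1)) else botD m (k/2 - (m+1))

theorem index_cases {m k : ℕ} (hk : k ≤ 4*m+2) :
    (∃ i ≤ m, k = 2*i) ∨ (∃ i < m, k = 2*i+1) ∨ k = 2*m+1 ∨ (∃ i ≤ m, k = 2*m+2+2*i) ∨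
      (∃ i < m, k = 2*m+3+2*i) := by
  obtain ⟨j, rfl | rfl⟩ := Nat.even_or_odd' k
  · by_cases hj : j ≤ m
    · exact Or.inl ⟨j, hj, rfl⟩
    · exact Or.inr (Or.inr (Or.inr (Or.inl ⟨j - (m+1), by omega, by omega⟩)))
  · rcases lt_trichotomy j m with hj | rfl | hj
    · exact Or.inr (Or.inl ⟨j, hj, rfl⟩)
    · exact Or.inr (Or.inr (Or.inl rfl))
    · exact Or.inr (Or.inr (Or.inr (Or.inr ⟨j - (m+1), by omega, by omega⟩)))

section

variable {m i : ℕ}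

theorem block_A (hi : i ≤ m) : block m (2*i) = blockA m i := by
  rw [block, if_pos (by omega), if_pos (even_two_mul i), Nat.mul_div_cancel_left i two_pos]

theorem block_B (hi : i < m) : block m (2*i+1) = blockB m i := by
  rw [block, if_pos (by omega), if_neg (Nat.not_even_two_mul_add_one i), if_neg (by omega),
    show (2*i+1)/2 = i by omega]

theorem block_G : block m (2*m+1) = insert (G m) (blockB m m) := by
  rw [block, if_pos (by omega), if_neg (Nat.not_even_two_mul_add_one m), if_pos rfl]

theorem block_C : block m (2*m+2+2*i) = blockC m i := by
  rw [block, if_neg (by omega), if_pos (by rw [Nat.even_iff]; omega),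
    show (2*m+2+2*i)/2 - (m+1) = i by omega]

theorem block_D : block m (2*m+3+2*i) = blockD m i := by
  rw [block, if_neg (by omega), if_neg (by rw [Nat.even_iff]; omega),
    show (2*m+3+2*i)/2 - (m+1) = i by omega]

theorem rep_A (hi : i ≤ m) : rep m (2*i) = topA m i := by
  rw [rep, if_pos (by omega), if_pos (even_two_mul i), Nat.mul_div_cancel_left i two_pos]

theorem rep_B (hi : i ≤ m) : rep m (2*i+1) = botB m i := by
  rw [rep, if_pos (by omega), if_neg (Nat.not_even_two_mul_add_one i),
    show (2*i+1)/2 = i by omega]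

theorem rep_C : rep m (2*m+2+2*i) = topC m i := by
  rw [rep, if_neg (by omega), if_pos (by rw [Nat.even_iff]; omega),
    show (2*m+2+2*i)/2 - (m+1) = i by omega]

theorem rep_D : rep m (2*m+3+2*i) = botD m i := by
  rw [rep, if_neg (by omega), if_neg (by rw [Nat.even_iff]; omega),
    show (2*m+3+2*i)/2 - (m+1) = i by omega]

end

theorem mem_block {m k y : ℕ} (hk : k ≤ 4*m+2) (hy : y ∈ block m k) :
    y ∈ XYp (2*m+3) ∧ (y ∈ SYp (2*m+3) ↔ Even k) := by
  rcases index_cases hk with ⟨i, hi, rfl⟩ | ⟨i, hi, rfl⟩ | rfl | ⟨i, hi, rfl⟩ | ⟨i, hi, rfl⟩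
  · rw [block_A hi] at hy
    have hS := mem_SYp_of_mem_blockA hi hy
    exact ⟨Finset.mem_union_left _ hS, iff_of_true hS (even_two_mul i)⟩
  · rw [block_B hi] at hy
    exact ⟨Finset.mem_union_right _ (mem_QYp_of_mem_blockB hi.le hy),
      iff_of_false (notMem_SYp_of_mem_blockB hi.le hy) (Nat.not_even_two_mul_add_one i)⟩
  · rw [block_G, Finset.mem_insert] at hy
    refine ⟨Finset.mem_union_right _ ?_, iff_of_false ?_ (Nat.not_even_two_mul_add_one m)⟩
    · rcases hy with rfl | hy
      exacts [G_mem_QYp m, mem_QYp_of_mem_blockB le_rfl hy]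
    · rcases hy with rfl | hy
      exacts [G_notMem_SYp m, notMem_SYp_of_mem_blockB le_rfl hy]
  · rw [block_C] at hy
    have hS := mem_SYp_of_mem_blockC hi hy
    exact ⟨Finset.mem_union_left _ hS, iff_of_true hS (by rw [Nat.even_iff]; omega)⟩
  · rw [block_D] at hy
    exact ⟨Finset.mem_union_right _ (mem_QYp_of_mem_blockD hi hy),
      iff_of_false (notMem_SYp_of_mem_blockD hi hy) (by rw [Nat.even_iff]; omega)⟩

theorem block_bounds {m k y : ℕ} (hk : k ≤ 4*m+2) (hy : y ∈ block m k) :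
    K m ≤ y + m ∧ y ≤ topC m m := by
  have : (4*m+6)*m = 4*(m*m)+6*m := by ring
  rcases index_cases hk with ⟨i, hi, rfl⟩ | ⟨i, hi, rfl⟩ | rfl | ⟨i, hi, rfl⟩ | ⟨i, hi, rfl⟩
  · rw [block_A hi] at hy
    have := Nat.mul_le_mul_left (4*m+6) hi
    simp only [blockA, topA, topC, Finset.mem_Icc] at hy ⊢
    omega
  · rw [block_B hi] at hy
    have := Nat.mul_le_mul_left (4*m+6) hi.le
    simp only [blockB, botB, topA, topC, Finset.mem_Icc] at hy ⊢
    omega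
  · rw [block_G, Finset.mem_insert] at hy
    simp only [blockB, botB, topA, topC, G, Finset.mem_Icc] at hy ⊢
    omega
  · rw [block_C] at hy
    have := Nat.mul_le_mul_left (4*m+6) hi
    simp only [blockC, topC, Finset.mem_Icc] at hy ⊢
    omega
  · rw [block_D] at hy
    have := Nat.mul_le_mul_left (4*m+6) (show i + 1 ≤ m from hi)
    have := mul_add_one (4*m+6) i
    simp only [blockD, botD, topC, Finset.mem_Icc] at hy ⊢
    omega

theorem rep_spec {m k : ℕ} (hk : k ≤ 4*m+2) : rep m k ∈ block m k ∧
    ∀ y ∈ block m k, (Even k → y ≤ rep m k) ∧ (¬Even k → rep m k ≤ y) := by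
  rcases index_cases hk with ⟨i, hi, rfl⟩ | ⟨i, hi, rfl⟩ | rfl | ⟨i, hi, rfl⟩ | ⟨i, hi, rfl⟩
  · rw [block_A hi, rep_A hi]
    refine ⟨by simp [blockA], fun y hy => ⟨fun _ => (Finset.mem_Icc.1 hy).2, fun h => ?_⟩⟩
    exact absurd (even_two_mul i) h
  · rw [block_B hi, rep_B hi.le]
    refine ⟨by simp [blockB], fun y hy => ⟨fun h => ?_, fun _ => (Finset.mem_Icc.1 hy).1⟩⟩
    exact absurd h (Nat.not_even_two_mul_add_one i)
  · rw [block_G, rep_B le_rfl]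
    refine ⟨by simp [blockB], fun y hy => ⟨fun h => absurd h (Nat.not_even_two_mul_add_one m),
      fun _ => ?_⟩⟩
    rw [Finset.mem_insert] at hy
    rcases hy with rfl | hy
    · simp only [G, botB, topA]
      have : (4*m+6)*m = 4*(m*m)+6*m := by ring
      omega
    · exact (Finset.mem_Icc.1 hy).1
  · rw [block_C, rep_C]
    refine ⟨by simp [blockC], fun y hy => ⟨fun _ => (Finset.mem_Icc.1 hy).2, fun h => ?_⟩⟩
    exact absurd (by rw [Nat.even_iff]; omega) h
  · rw [block_D, rep_D]
    refine ⟨by simp [blockD], fun y hy => ⟨fun h => ?_, fun _ => (Finset.mem_Icc.1 hy).1⟩⟩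
    exact absurd h (by rw [Nat.even_iff]; omega)

theorem lt_of_mem_block_succ {m k a b : ℕ} (hk : k < 4*m+2) (ha : a ∈ block m k)
    (hb : b ∈ block m (k+1)) : a < b := by
  have : (4*m+6)*m = 4*(m*m)+6*m := by ring
  rcases index_cases hk.le with ⟨i, hi, rfl⟩ | ⟨i, hi, rfl⟩ | rfl | ⟨i, hi, rfl⟩ | ⟨i, hi, rfl⟩
  · rw [block_A hi] at ha
    simp only [blockA, topA, Finset.mem_Icc] at ha
    rcases hi.lt_or_eq with hi | rfl
    · rw [block_B hi] at hb
      simp only [blockB, botB, topA, Finset.mem_Icc] at hb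
      omega
    · rw [block_G, Finset.mem_insert] at hb
      simp only [blockB, botB, topA, G, Finset.mem_Icc] at hb
      omega
  · rw [block_B hi] at ha
    rw [show 2*i+1+1 = 2*(i+1) by ring, block_A (show i + 1 ≤ m from hi)] at hb
    have := mul_add_one (4*m+6) i
    simp only [blockA, blockB, botB, topA, Finset.mem_Icc] at ha hb
    omega
  · rw [block_G, Finset.mem_insert] at ha
    rw [show 2*m+1+1 = 2*m+2+2*0 by ring, block_C] at hb
    simp only [blockB, blockC, botB, topA, topC, G, Finset.mem_Icc] at ha hb
    omega
  · rw [block_C] at ha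
    rw [show 2*m+2+2*i+1 = 2*m+3+2*i by ring, block_D] at hb
    simp only [blockC, blockD, botD, Finset.mem_Icc] at ha hb
    omega
  · rw [block_D] at ha
    rw [show 2*m+3+2*i+1 = 2*m+2+2*(i+1) by ring, block_C] at hb
    have := mul_add_one (4*m+6) i
    simp only [blockC, blockD, botD, topC, Finset.mem_Icc] at ha hb
    omega

theorem cases_of_mem_XYp {m z : ℕ} (hz : z ∈ XYp (2*m+3)) (hlo : K m ≤ z + (m+1))
    (hhi : z ≤ E m) : z + (m+1) = K m ∨ (∃ k ≤ 4*m+2, z ∈ block m k) ∨ z = E m := by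
  rcases Finset.mem_union.1 hz with hS | hQ
  · rcases mem_blockA_or_mem_blockC hS hlo hhi with ⟨i, hi, hy⟩ | ⟨i, hi, hy⟩
    · exact Or.inr (Or.inl ⟨2*i, by omega, by rwa [block_A hi]⟩)
    · exact Or.inr (Or.inl ⟨2*m+2+2*i, by omega, by rwa [block_C]⟩)
  · rcases cases_of_mem_QYp hQ hlo hhi with h | ⟨i, hi, hy⟩ | rfl | ⟨i, hi, hy⟩ | h
    · exact Or.inl h
    · rcases hi.lt_or_eq with hi | rfl
      · exact Or.inr (Or.inl ⟨2*i+1, by omega, by rwa [block_B hi]⟩)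
      · exact Or.inr (Or.inl ⟨2*i+1, by omega, by rw [block_G]; exact Finset.mem_insert_of_mem hy⟩)
    · exact Or.inr (Or.inl ⟨2*m+1, by omega, by rw [block_G]; exact Finset.mem_insert_self _ _⟩)
    · exact Or.inr (Or.inl ⟨2*m+3+2*i, by omega, by rwa [block_D]⟩)
    · exact Or.inr (Or.inr h)

theorem topC_lt_E (m : ℕ) : topC m m < E m := by
  have : (4*m+6)*m = 4*(m*m)+6*m := by ring
  simp only [topC, E]
  omega

theorem isRunDecomposition (m : ℕ) :
    IsRunDecomposition (XYp (2*m+3)) (ΔYp (2*m+3)) (4*m+2) (block m) (rep m) where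
  mem k hk y hy := (mem_block hk hy).1
  pos_iff k hk y hy := ΔYp_pos_iff.trans (mem_block hk hy).2
  ne_zero y _ := by unfold ΔYp; split_ifs <;> norm_num
  rep_mem k hk := (rep_spec hk).1
  le_rep k hk he y hy := ((rep_spec hk).2 y hy).1 he
  rep_le k hk ho y hy := ((rep_spec hk).2 y hy).2 ho
  lt_of_mem_succ k hk a ha b hb := lt_of_mem_block_succ hk ha hb
  cover z hz a ha b hb haz hzb := by
    have := (block_bounds (Nat.zero_le _) ha).1
    have := (block_bounds le_rfl hb).2
    have := topC_lt_E m
    rcases cases_of_mem_XYp hz (by omega) (by omega) with h | h | h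
    · omega
    · exact h
    · omega
  below z hz hlow := by
    have h0 : block m 0 = blockA m 0 := block_A (Nat.zero_le m)
    have hzK := hlow (K m - m) (by simp [h0, blockA, topA])
    have hm : 1 ≤ m := Nat.pos_of_ne_zero (by rintro rfl; exact Nat.not_lt_zero _ hzK)
    refine ⟨K m - (m+1), Finset.mem_union_right _ (sub_mem_QYp hm), by omega, fun a ha => ?_,
      by rw [ΔYp_pos_iff]; exact sub_notMem_SYp hm⟩
    have := (block_bounds (Nat.zero_le _) ha).1
    have := le_K m
    omega
  above z hz hhigh := by
    have hn : block m (4*m+2) = blockC m m := by rw [show 4*m+2 = 2*m+2+2*m by ring, block_C]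
    have hzC := hhigh (topC m m) (by simp [hn, blockC])
    have hKC : K m ≤ topC m m := by simp only [topC]; omega
    refine ⟨E m, Finset.mem_union_right _ (E_mem_QYp m), ?_,
      fun b hb => (block_bounds le_rfl hb).2.trans_lt (topC_lt_E m),
      fun h => E_notMem_SYp m (ΔYp_pos_iff.1 (h.2 (by rw [Nat.even_iff]; omega)))⟩
    by_contra! hzE
    rcases cases_of_mem_XYp hz (by omega) hzE.le with h | ⟨k, hk, hzk⟩ | h
    · omega
    · exact absurd (block_bounds hk hzk).2 (not_le.2 hzC)
    · omega

theorem creature_A {m i : ℕ} (hi : i ≤ m) : creature (m+1) (2*i+1) = ((m - i + 1 : ℕ) : ℤ) := by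
  rcases hi.lt_or_eq with hi | rfl
  · rw [creature, if_pos (by omega), if_pos (by omega), show (2*i+1+1)/2 = i+1 by omega]
    push_cast [hi.le]
    ring
  · rw [creature, if_neg (by omega), if_pos (by omega)]
    simp

theorem creature_B {m i : ℕ} (hi : i < m) :
    creature (m+1) (2*i+1+1) = -((m - i + 1 : ℕ) : ℤ) := by
  rw [creature, if_pos (by omega), if_neg (by omega), show (2*i+1+1)/2 = i+1 by omega]
  push_cast [hi.le]
  ring

theorem creature_G (m : ℕ) : creature (m+1) (2*m+1+1) = -2 := by
  rw [creature, if_neg (by omega), if_neg (by omega), if_pos (by omega)]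

theorem creature_C (m i : ℕ) : creature (m+1) (2*m+2+2*i+1) = ((i + 1 : ℕ) : ℤ) := by
  rcases Nat.eq_zero_or_pos i with rfl | hi
  · rw [creature, if_neg (by omega), if_neg (by omega), if_neg (by omega), if_pos (by omega)]
    simp
  · rw [creature, if_neg (by omega), if_neg (by omega), if_neg (by omega), if_neg (by omega),
      if_neg (by omega), show (2*m+2+2*i+1 - 2*(m+1))/2 = i by omega]
    push_cast
    ring

theorem creature_D (m i : ℕ) : creature (m+1) (2*m+3+2*i+1) = -((i + 2 : ℕ) : ℤ) := by
  rw [creature, if_neg (by omega), if_neg (by omega), if_neg (by omega), if_neg (by omega),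
    if_pos (by omega), show (2*m+3+2*i+1 - 2*(m+1))/2 = i+1 by omega]
  push_cast
  ring

theorem redDelta_rep {m k : ℕ} (hk : k ≤ 4*m+2) :
    redDelta (XYp (2*m+3)) (ΔYp (2*m+3)) (rep m k) = creature (m+1) (k+1) := by
  have hΔ : ∀ y ∈ block m k, ΔYp (2*m+3) y = if Even k then 1 else -1 := by
    intro y hy
    simp only [ΔYp, (mem_block hk hy).2]
  rw [(isRunDecomposition m).redDelta_eq hk (rep_spec hk).1, Finset.sum_congr rfl hΔ,
    Finset.sum_const, nsmul_eq_mul]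
  have := le_K m
  rcases index_cases hk with ⟨i, hi, rfl⟩ | ⟨i, hi, rfl⟩ | rfl | ⟨i, hi, rfl⟩ | ⟨i, hi, rfl⟩
  · rw [block_A hi, creature_A hi, if_pos (even_two_mul i), mul_one, blockA, Nat.card_Icc]
    simp only [topA]
    congr 1
    omega
  · rw [block_B hi, creature_B hi, if_neg (Nat.not_even_two_mul_add_one i), mul_neg_one, blockB,
      Nat.card_Icc]
    congr 2
    omega
  · have hG : G m ∉ blockB m m := by
      simp only [blockB, botB, topA, G, Finset.mem_Icc]
      have : (4*m+6)*m = 4*(m*m)+6*m := by ring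
      omega
    rw [block_G, creature_G, if_neg (Nat.not_even_two_mul_add_one m), mul_neg_one,
      Finset.card_insert_of_notMem hG, blockB, Nat.card_Icc]
    simp
  · rw [block_C, creature_C, if_pos (by rw [Nat.even_iff]; omega), mul_one, blockC, Nat.card_Icc]
    simp only [topC]
    congr 1
    omega
  · rw [block_D, creature_D, if_neg (by rw [Nat.even_iff]; omega), mul_neg_one, blockD,
      Nat.card_Icc]
    congr 2
    omega

theorem two_mul_topC_le_N (m : ℕ) : 2 * topC m m ≤ N m := by
  have : (4*m+6)*m = 4*(m*m)+6*m := by ring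
  simp only [topC, N]
  omega

theorem rep_lt_rep {m j k : ℕ} (hjk : j < k) (hk : k ≤ 4*m+2) : rep m j < rep m k :=
  (isRunDecomposition m).lt_of_mem_of_lt hjk hk (rep_spec (hjk.le.trans hk)).1 (rep_spec hk).1

theorem rep_le_rep {m j k : ℕ} (hjk : j ≤ k) (hk : k ≤ 4*m+2) : rep m j ≤ rep m k :=
  hjk.lt_or_eq.elim (fun h => (rep_lt_rep h hk).le) (fun h => h ▸ le_rfl)

theorem filter_redSet_eq (m : ℕ) :
    (redSet (XYp (2*m+3)) (ΔYp (2*m+3))).filter (fun x => K m ≤ x ∧ 2*x ≤ N m) =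
      (List.ofFn fun k : Fin (4*m+3) => rep m k).toFinset := by
  have hD := isRunDecomposition m
  ext x
  simp only [Finset.mem_filter, List.mem_toFinset, List.mem_ofFn]
  constructor
  · rintro ⟨hred, hKx, hNx⟩
    have hE : N m < 2 * E m := by simp only [N, E]; omega
    rcases cases_of_mem_XYp (Finset.mem_filter.1 hred).1 (by omega) (by omega) with
      h | ⟨k, hk, hxk⟩ | h
    · omega
    · exact ⟨⟨k, by omega⟩, ((hD.mem_redSet_iff hk hxk).1 hred).symm⟩
    · omega
  · rintro ⟨k, rfl⟩
    have hk : k.1 ≤ 4*m+2 := by omega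
    have h0 : rep m 0 = K m := by simpa [topA] using rep_A (m := m) (Nat.zero_le m)
    have hn : rep m (4*m+2) = topC m m := by rw [show 4*m+2 = 2*m+2+2*m by ring, rep_C]
    refine ⟨(hD.mem_redSet_iff hk (rep_spec hk).1).2 rfl, h0 ▸ rep_le_rep (Nat.zero_le _) hk, ?_⟩
    have := hn ▸ rep_le_rep hk le_rfl
    have := two_mul_topC_le_N m
    omega

theorem card_filter_redSet_and_values (m : ℕ) :
    ((redSet (XYp (2*m+3)) (ΔYp (2*m+3))).filter (fun x => K m ≤ x ∧ 2*x ≤ N m)).card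
      = 4*m+3 ∧
    (((redSet (XYp (2*m+3)) (ΔYp (2*m+3))).filter
        (fun x => K m ≤ x ∧ 2*x ≤ N m)).sort (· ≤ ·)).map (redDelta (XYp (2*m+3)) (ΔYp (2*m+3)))
      = List.ofFn (fun k : Fin (4*m+3) => creature (m+1) (k.1+1)) := by
  have hL : (List.ofFn fun k : Fin (4*m+3) => rep m k).Pairwise (· < ·) :=
    List.pairwise_ofFn.2 fun i j hij => rep_lt_rep hij (by omega)
  have hnodup := hL.imp ne_of_lt
  rw [filter_redSet_eq, List.toFinset_card_of_nodup hnodup,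
    (List.toFinset_sort _ hnodup).2 (hL.imp le_of_lt), List.map_ofFn]
  exact ⟨List.length_ofFn, congrArg List.ofFn (funext fun k => redDelta_rep (by omega))⟩

end Brieskorn

/-- for odd `p = 2ξ+1 ≥ 3` and `K = (ξ-1)(r₋+r₊)`, the part of the reduced
delta sequence `(X̃_{Y_p}, Δ̃_{Y_p})` of `Σ(p,2p-1,2p+1)` lying in `[K, N_p/2]` has exactly
`4ξ-1` elements, and, listed in increasing order, its values form the creature sequence
`Δ_{C_p}`. -/
theorem stmt_11 (p ξ : ℕ) (hξ : 1 ≤ ξ) (hp : p = 2*ξ + 1) :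
    ((redSet (XYp p) (ΔYp p)).filter
        (fun x => (ξ - 1) * (rMinus p + rPlus p) ≤ x ∧ 2*x ≤ NP p)).card = 4*ξ - 1 ∧
    (((redSet (XYp p) (ΔYp p)).filter
        (fun x => (ξ - 1) * (rMinus p + rPlus p) ≤ x ∧ 2*x ≤ NP p)).sort (· ≤ ·)).map
          (redDelta (XYp p) (ΔYp p))
      = List.ofFn (fun i : Fin (4*ξ - 1) => creature ξ (i.1 + 1)) := by
  obtain ⟨m, rfl⟩ : ∃ m, ξ = m + 1 := ⟨ξ - 1, by omega⟩
  obtain rfl : p = 2*m+3 := by omega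
  have hK : (m + 1 - 1) * (rMinus (2*m+3) + rPlus (2*m+3)) = Brieskorn.K m := by
    rw [Brieskorn.rMinus_eq, Brieskorn.rPlus_eq, Nat.add_sub_cancel, Brieskorn.K]
    ring
  rw [hK, Brieskorn.NP_eq, show 4*(m+1) - 1 = 4*m+3 by omega]
  exact Brieskorn.card_filter_redSet_and_values m
end
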